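/- Let K be a number field and let P be any set of nonzero prime ideals of O_K. Let f be the indicator function of the set of salient ideals I of O_K with p_min(I) ∈ P. Then for every nonzero ideal I of O_K, ∑_{J ⊇ I} μ_K(J)·f(J) = −#{p prime dividing I : N(p) = M(I) and p ∈ P}, where the sum runs over all ideals J of O_K dividing I. -/

import Mathlib

open NumberField Ideal Filter
open scoped Classical

variable (K : Type) [Field K] [NumberField K]

/-- The Möbius function on ideals of the ring of integers of `K`:
`μ(O_K) = 1`, `μ(I) = (-1)^r` if `I` is a product of `r` distinct primes, `μ(I) = 0`
if `I` is divisible by the square of a prime. -/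
noncomputable def muK (I : Ideal (𝓞 K)) : ℤ :=
  if Squarefree I then (-1) ^ (UniqueFactorizationMonoid.factors I).card else 0

/-- `M(I)`: the maximal norm of a prime divisor of `I` (with `M(O_K) = 1`). -/
noncomputable def maxNorm (I : Ideal (𝓞 K)) : ℕ :=
  if I = ⊤ then 1
  else sSup ((fun p => Ideal.absNorm p) '' {p : Ideal (𝓞 K) | p.IsPrime ∧ p ∣ I})

/-! Only squarefree divisors contribute to the sum: they are the products `∏ p ∈ S, p` over subsets
`S` of the prime factors of `I`, and `μ_K` of such a product is `(-1) ^ #S`. The product is salient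
with `p_min ∈ P` exactly when `S` has a unique element `p` of least norm and `p ∈ P`. Grouping the
subsets by this `p`, the other elements of `S` range over all subsets of the prime factors of `I` of
norm larger than `N(p)`, and the alternating sum over them vanishes unless there are none, i.e.
unless `N(p) = M(I)`. -/

namespace Finset

variable {α β : Type*} [LinearOrder β] (N : α → β) (P : Set α)

theorem ite_exists_strictMin_eq_sum {S T : Finset α} (hST : S ⊆ T) :
    (if ∃ p ∈ S, p ∈ P ∧ ∀ q ∈ S, q ≠ p → N p < N q then 1 else 0 : ℤ) =
      ∑ p ∈ T, if p ∈ S ∧ p ∈ P ∧ ∀ q ∈ S, q ≠ p → N p < N q then 1 else 0 := by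
  rw [sum_boole]
  split_ifs with h
  · obtain ⟨p, hpS, hpP, hpmin⟩ := h
    suffices {q ∈ T | q ∈ S ∧ q ∈ P ∧ ∀ r ∈ S, r ≠ q → N q < N r} = {p} by simp [this]
    ext q
    simp only [mem_filter, mem_singleton]
    constructor
    · rintro ⟨-, hqS, -, hqmin⟩
      by_contra hqp
      exact lt_asymm (hpmin q hqS hqp) (hqmin p hpS (Ne.symm hqp))
    · rintro rfl
      exact ⟨hST hpS, hpS, hpP, hpmin⟩
  · rw [eq_comm, Nat.cast_eq_zero, card_eq_zero, filter_eq_empty_iff]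
    exact fun q _ hq => h ⟨q, hq⟩

theorem sum_powerset_filter_strictMin_neg_one_pow {T : Finset α} {p : α} (hp : p ∈ T) :
    ∑ S ∈ T.powerset with p ∈ S ∧ ∀ q ∈ S, q ≠ p → N p < N q, (-1 : ℤ) ^ #S =
      -if ∀ q ∈ T, N q ≤ N p then 1 else 0 := by
  set U := T.filter (fun q => N p < N q)
  have hpU : p ∉ U := by simp [U]
  calc ∑ S ∈ T.powerset with p ∈ S ∧ ∀ q ∈ S, q ≠ p → N p < N q, (-1 : ℤ) ^ #S
      = ∑ V ∈ U.powerset, (-1 : ℤ) ^ (#V + 1) := by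
        refine sum_nbij' (erase · p) (insert p) ?_ ?_ ?_ ?_ ?_
        · simp +contextual [U, subset_iff]
        · simp +contextual [U, subset_iff, hp]
        · simp +contextual
        · intro V hV
          exact erase_insert fun h => hpU (mem_powerset.1 hV h)
        · intro S hS
          rw [card_erase_add_one (mem_filter.1 hS).2.1]
    _ = -if ∀ q ∈ T, N q ≤ N p then 1 else 0 := by
        simp only [pow_succ, mul_neg_one, sum_neg_distrib, sum_powerset_neg_one_pow_card]
        simp [U, filter_eq_empty_iff]

theorem sum_powerset_neg_one_pow_mul_ite_exists_strictMin (T : Finset α) :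
    ∑ S ∈ T.powerset, (-1 : ℤ) ^ #S *
        (if ∃ p ∈ S, p ∈ P ∧ ∀ q ∈ S, q ≠ p → N p < N q then 1 else 0) =
      -#{p ∈ T | p ∈ P ∧ ∀ q ∈ T, N q ≤ N p} := by
  calc ∑ S ∈ T.powerset, (-1 : ℤ) ^ #S *
        (if ∃ p ∈ S, p ∈ P ∧ ∀ q ∈ S, q ≠ p → N p < N q then 1 else 0)
      = ∑ p ∈ T, if p ∈ P then
          ∑ S ∈ T.powerset with p ∈ S ∧ ∀ q ∈ S, q ≠ p → N p < N q, (-1 : ℤ) ^ #S else 0 := by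
        rw [sum_congr rfl fun S hS => by
          rw [ite_exists_strictMin_eq_sum N P (mem_powerset.1 hS), mul_sum], sum_comm]
        refine sum_congr rfl fun p _ => ?_
        split_ifs with hpP <;> simp [sum_filter, hpP]
    _ = ∑ p ∈ T, -if p ∈ P ∧ ∀ q ∈ T, N q ≤ N p then 1 else 0 := by
        refine sum_congr rfl fun p hp => ?_
        by_cases hpP : p ∈ P <;> simp [hpP, sum_powerset_filter_strictMin_neg_one_pow N hp]
    _ = -#{p ∈ T | p ∈ P ∧ ∀ q ∈ T, N q ≤ N p} := by
        rw [sum_neg_distrib, sum_boole]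

end Finset

namespace UniqueFactorizationMonoid

open Finset

variable {α : Type*} [CommMonoidWithZero α] [UniqueFactorizationMonoid α] [Subsingleton αˣ]

theorem normalizedFactors_finset_prod {S : Finset α} (hS : ∀ p ∈ S, Prime p) :
    normalizedFactors (∏ p ∈ S, p) = S.val := by
  simpa using normalizedFactors_prod_of_prime (m := S.val) hS

theorem prime_of_mem_primeFactors {p a : α} (hp : p ∈ primeFactors a) : Prime p :=
  prime_of_normalized_factor p (mem_primeFactors.1 hp)

variable [Nontrivial α]

theorem prod_primeFactors_of_squarefree {a : α} (ha : Squarefree a) :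
    ∏ p ∈ primeFactors a, p = a := by
  rw [← associated_iff_eq, prod_eq_multiset_prod, primeFactors_val_eq_normalizedFactors
    ha.isRadical, Multiset.map_id']
  exact prod_normalizedFactors ha.ne_zero

theorem moebius_finset_prod {S : Finset α} (hS : ∀ p ∈ S, Prime p) :
    moebius (∏ p ∈ S, p) = (-1) ^ #S := by
  have hne : ∏ p ∈ S, p ≠ 0 := prod_ne_zero_iff.2 fun p hp => (hS p hp).ne_zero
  have hsq : Squarefree (∏ p ∈ S, p) := by
    rw [squarefree_iff_nodup_normalizedFactors hne, normalizedFactors_finset_prod hS]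
    exact S.nodup
  rw [hsq.moebius_eq, factors_eq_normalizedFactors, normalizedFactors_finset_prod hS, card_val]

theorem finsum_mem_dvd_moebius_mul_eq_sum_powerset {a : α} (ha : a ≠ 0) (g : α → ℤ) :
    ∑ᶠ b ∈ {b | b ∣ a}, moebius b * g b =
      ∑ S ∈ (primeFactors a).powerset, (-1) ^ #S * g (∏ p ∈ S, p) := by
  have hprime : ∀ S ∈ (primeFactors a).powerset, ∀ p ∈ S, Prime p := fun S hS p hp =>
    prime_of_mem_primeFactors (mem_powerset.1 hS hp)
  calc ∑ᶠ b ∈ {b | b ∣ a}, moebius b * g b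
      = ∑ b ∈ (primeFactors a).powerset.image (fun S => ∏ p ∈ S, p), moebius b * g b := by
        refine finsum_mem_eq_sum_of_subset _ (fun b ⟨hba, hb⟩ => ?_) fun b hb => ?_
        · have hsq : Squarefree b := by
            by_contra h
            exact hb (by simp [moebius_of_not_squarefree h])
          refine mem_image.2 ⟨primeFactors b, mem_powerset.2 fun p hp => ?_,
            prod_primeFactors_of_squarefree hsq⟩
          rw [mem_primeFactors] at hp ⊢
          exact Multiset.mem_of_le
            ((dvd_iff_normalizedFactors_le_normalizedFactors hsq.ne_zero ha).1 hba) hp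
        · obtain ⟨S, hS, rfl⟩ := mem_image.1 hb
          exact (prod_dvd_prod_of_subset S _ id (mem_powerset.1 hS)).trans radical_dvd_self
    _ = ∑ S ∈ (primeFactors a).powerset, moebius (∏ p ∈ S, p) * g (∏ p ∈ S, p) :=
        sum_image fun S₁ h₁ S₂ h₂ h => by
          simpa [normalizedFactors_finset_prod (hprime _ h₁),
            normalizedFactors_finset_prod (hprime _ h₂)] using congrArg normalizedFactors h
    _ = ∑ S ∈ (primeFactors a).powerset, (-1) ^ #S * g (∏ p ∈ S, p) :=
        sum_congr rfl fun S hS => by rw [moebius_finset_prod (hprime S hS)]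

end UniqueFactorizationMonoid

namespace Ideal

open UniqueFactorizationMonoid

variable {R : Type*} [CommRing R] [IsDedekindDomain R]

theorem isPrime_and_dvd_iff_mem_primeFactors {I : Ideal R} (hI : I ≠ ⊥) {p : Ideal R} :
    p.IsPrime ∧ p ∣ I ↔ p ∈ primeFactors I := by
  rw [mem_primeFactors, mem_normalizedFactors_iff hI, dvd_iff_le]

theorem isPrime_and_dvd_finset_prod_iff {S : Finset (Ideal R)} (hS : ∀ p ∈ S, Prime p)
    {q : Ideal R} : q.IsPrime ∧ q ∣ ∏ p ∈ S, p ↔ q ∈ S := by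
  rw [isPrime_and_dvd_iff_mem_primeFactors
    (Finset.prod_ne_zero_iff.2 fun p hp => (hS p hp).ne_zero), mem_primeFactors,
    normalizedFactors_finset_prod hS]
  rfl

theorem exists_strictMin_prime_dvd_finset_prod_iff {β : Type*} [LinearOrder β]
    {S : Finset (Ideal R)} (hS : ∀ p ∈ S, Prime p) (N : Ideal R → β) (P : Set (Ideal R)) :
    (∃ p : Ideal R, p.IsPrime ∧ p ∣ ∏ r ∈ S, r ∧
        (∀ q : Ideal R, q.IsPrime → q ∣ ∏ r ∈ S, r → q ≠ p → N p < N q) ∧ p ∈ P) ↔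
      ∃ p ∈ S, p ∈ P ∧ ∀ q ∈ S, q ≠ p → N p < N q := by
  simp only [← isPrime_and_dvd_finset_prod_iff hS, and_imp, and_assoc]
  exact exists_congr fun p => by tauto

end Ideal

open UniqueFactorizationMonoid Finset

theorem muK_eq_moebius : muK K = moebius := rfl

theorem absNorm_eq_maxNorm_iff {I : Ideal (𝓞 K)} (hI : I ≠ ⊥) {p : Ideal (𝓞 K)}
    (hp : p ∈ primeFactors I) :
    absNorm p = maxNorm K I ↔ ∀ q ∈ primeFactors I, absNorm q ≤ absNorm p := by
  have hmem {q : Ideal (𝓞 K)} := Ideal.isPrime_and_dvd_iff_mem_primeFactors (p := q) hI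
  have hItop : I ≠ ⊤ := fun h =>
    (hmem.2 hp).1.ne_top (top_le_iff.1 (h ▸ le_of_dvd (hmem.2 hp).2))
  have hfin : {q : Ideal (𝓞 K) | q.IsPrime ∧ q ∣ I}.Finite :=
    (primeFactors I).finite_toSet.subset fun q hq => hmem.1 hq
  rw [maxNorm, if_neg hItop]
  constructor
  · intro h q hq
    rw [h]
    exact le_csSup (hfin.image _).bddAbove (Set.mem_image_of_mem _ (hmem.2 hq))
  · intro h
    symm
    refine IsGreatest.csSup_eq ⟨Set.mem_image_of_mem _ (hmem.2 hp), ?_⟩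
    rintro _ ⟨q, hq, rfl⟩
    exact h q (hmem.1 hq)

theorem natCard_primeFactors_absNorm_eq_maxNorm {I : Ideal (𝓞 K)} (hI : I ≠ ⊥)
    (P : Set (Ideal (𝓞 K))) :
    Nat.card {p : Ideal (𝓞 K) // p.IsPrime ∧ p ∣ I ∧ absNorm p = maxNorm K I ∧ p ∈ P} =
      #{p ∈ primeFactors I | p ∈ P ∧ ∀ q ∈ primeFactors I, absNorm q ≤ absNorm p} := by
  refine Nat.subtype_card _ fun p => ?_
  rw [mem_filter]
  constructor
  · rintro ⟨hpI, hpP, hmax⟩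
    obtain ⟨hp, hpdvd⟩ := (Ideal.isPrime_and_dvd_iff_mem_primeFactors hI).2 hpI
    exact ⟨hp, hpdvd, (absNorm_eq_maxNorm_iff K hI hpI).2 hmax, hpP⟩
  · rintro ⟨hp, hpdvd, hmax, hpP⟩
    have hpI := (Ideal.isPrime_and_dvd_iff_mem_primeFactors hI).1 ⟨hp, hpdvd⟩
    exact ⟨hpI, hpP, (absNorm_eq_maxNorm_iff K hI hpI).1 hmax⟩

theorem duality_indicator_general (P : Set (Ideal (𝓞 K)))
    (I : Ideal (𝓞 K)) (hI : I ≠ 0) :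
    (∑ᶠ J ∈ {J : Ideal (𝓞 K) | I ≤ J},
        muK K J * (if (∃ p : Ideal (𝓞 K), p.IsPrime ∧ p ∣ J ∧
          (∀ q : Ideal (𝓞 K), q.IsPrime → q ∣ J → q ≠ p →
            Ideal.absNorm p < Ideal.absNorm q) ∧ p ∈ P) then 1 else 0)) =
      -(Nat.card {p : Ideal (𝓞 K) // p.IsPrime ∧ p ∣ I ∧
          Ideal.absNorm p = maxNorm K I ∧ p ∈ P} : ℤ) := by
  simp_rw [← Ideal.dvd_iff_le, muK_eq_moebius]
  rw [finsum_mem_dvd_moebius_mul_eq_sum_powerset hI, natCard_primeFactors_absNorm_eq_maxNorm K hI,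
    ← sum_powerset_neg_one_pow_mul_ite_exists_strictMin]
  refine sum_congr rfl fun S hS => ?_
  congr 2
  exact propext (Ideal.exists_strictMin_prime_dvd_finset_prod_iff
    (fun p hp => prime_of_mem_primeFactors (mem_powerset.1 hS hp)) _ P)
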